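/- Let n ≥ 1, let T ∈ ℝ^{n×n} be the tridiagonal Toeplitz matrix with 2 on the diagonal and −1 on the first sub- and superdiagonals, and let U ∈ ℝ^{n×2} have columns √2·e₁ and √2·e_n. Then the 2×2 matrix I₂ + Uᵗ T⁻² U is invertible with determinant det(I₂ + Uᵗ T⁻² U) = (n² + 2n + 3)/3. -/

import Mathlib

/-!
The inverse of `T` is the discrete Green's function `G(i, j) = (min i j + 1)(n - max i j)/(n + 1)`
(0-indexed): extended to all integers it vanishes at `i = -1` and `i = n`, and its second
difference in `i` is the Kronecker delta, which is exactly `T G = 1`. Since `G` is symmetric,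
`Uᵀ T⁻² U` is the Gram matrix of the two columns of `G U`, namely `√2/(n+1) · (n - k)` and
`√2/(n+1) · (k + 1)`; power sums give `!![a, b; b, a]` with `a = n(2n+1)/(3(n+1))` and
`b = n(n+2)/(3(n+1))`, and the determinant factors as
`(1 + a + b)(1 + a - b) = (n + 1) · (n² + 2n + 3)/(3(n+1))`.
-/

open Matrix Finset

/-- The `n × n` tridiagonal Toeplitz matrix `tridiag(-1, 2, -1)`. -/
def Tmat (n : ℕ) : Matrix (Fin n) (Fin n) ℝ :=
  Matrix.of fun i j =>
    if (i : ℕ) = (j : ℕ) then 2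
    else if (j : ℕ) = (i : ℕ) + 1 ∨ (i : ℕ) = (j : ℕ) + 1 then -1
    else 0

/-- The `n × 2` matrix whose columns are `√2·e₁` and `√2·eₙ`. -/
noncomputable def Umat (n : ℕ) : Matrix (Fin n) (Fin 2) ℝ :=
  Matrix.of fun i k =>
    if k = 0 then (if (i : ℕ) = 0 then Real.sqrt 2 else 0)
    else (if (i : ℕ) = n - 1 then Real.sqrt 2 else 0)

noncomputable def green (n : ℕ) (i j : ℤ) : ℝ :=
  ((min i j + 1) * (n - max i j) : ℤ) / (n + 1)

theorem green_neg_one_left (n : ℕ) {j : ℤ} (hj : -1 ≤ j) : green n (-1) j = 0 := by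
  simp [green, min_eq_left hj]

theorem green_natCast_left (n : ℕ) {j : ℤ} (hj : j ≤ n) : green n n j = 0 := by
  simp [green, max_eq_left hj]

theorem green_second_diff (n : ℕ) (i j : ℤ) :
    2 * green n i j - green n (i - 1) j - green n (i + 1) j = if i = j then 1 else 0 := by
  have hn : (n : ℝ) + 1 ≠ 0 := by positivity
  simp only [green]
  rcases lt_trichotomy i j with h | rfl | h
  · rw [if_neg h.ne, min_eq_left h.le, max_eq_right h.le, min_eq_left (by omega : i - 1 ≤ j),
      max_eq_right (by omega : i - 1 ≤ j), min_eq_left (by omega : i + 1 ≤ j),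
      max_eq_right (by omega : i + 1 ≤ j)]
    push_cast; field_simp; ring
  · rw [if_pos rfl, min_self, max_self, min_eq_left (by omega : i - 1 ≤ i),
      max_eq_right (by omega : i - 1 ≤ i), min_eq_right (by omega : i ≤ i + 1),
      max_eq_left (by omega : i ≤ i + 1)]
    push_cast; field_simp; ring
  · rw [if_neg h.ne', min_eq_right h.le, max_eq_left h.le, min_eq_right (by omega : j ≤ i - 1),
      max_eq_left (by omega : j ≤ i - 1), min_eq_right (by omega : j ≤ i + 1),
      max_eq_left (by omega : j ≤ i + 1)]
    push_cast; field_simp; ring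

theorem Fin.sum_ite_intCast_eq {M : Type*} [AddCommMonoid M] {n : ℕ} (m : ℤ) (c : M)
    (hc : m < 0 ∨ n ≤ m → c = 0) :
    ∑ k : Fin n, (if (k : ℤ) = m then c else 0) = c := by
  by_cases hm : 0 ≤ m ∧ m < n
  · rw [Fintype.sum_eq_single ⟨m.toNat, by omega⟩
      fun k hk => if_neg fun h => hk (by ext; simp only [← h, Int.toNat_natCast])]
    simp only [Int.ofNat_toNat, sup_eq_left.mpr hm.1, if_true]
  · simp [hc (by omega)]

/-- The boundary conditions make the first and last rows of `T` act like interior rows. -/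
theorem Tmat_mulVec_apply (n : ℕ) (f : ℤ → ℝ) (hleft : f (-1) = 0) (hright : f n = 0)
    (i : Fin n) : (Tmat n *ᵥ fun k => f k) i = 2 * f i - f (i - 1) - f (i + 1) := by
  have hentry (k : Fin n) : Tmat n i k * f k = (if (k : ℤ) = i then 2 * f i else 0)
      - (if (k : ℤ) = i - 1 then f (i - 1) else 0)
      - (if (k : ℤ) = i + 1 then f (i + 1) else 0) := by
    simp only [Tmat, of_apply]
    split_ifs <;> first | omega | simp_all
  simp only [mulVec, dotProduct, hentry, sum_sub_distrib]
  rw [Fin.sum_ite_intCast_eq, Fin.sum_ite_intCast_eq, Fin.sum_ite_intCast_eq]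
  · intro h; rwa [show (i : ℤ) + 1 = n by omega]
  · intro h; rwa [show (i : ℤ) - 1 = -1 by omega]
  · omega

noncomputable def Tinv (n : ℕ) : Matrix (Fin n) (Fin n) ℝ := of fun i j => green n i j

theorem Tmat_mul_Tinv (n : ℕ) : Tmat n * Tinv n = 1 := by
  ext i j
  have h := Tmat_mulVec_apply n (fun k => green n k j) (green_neg_one_left n (by omega))
    (green_natCast_left n (by omega)) i
  rw [green_second_diff] at h
  exact h.trans (by simp [one_apply, Fin.ext_iff])

theorem inv_Tmat (n : ℕ) : (Tmat n)⁻¹ = Tinv n := inv_eq_right_inv (Tmat_mul_Tinv n)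

theorem Tinv_transpose (n : ℕ) : (Tinv n)ᵀ = Tinv n := by
  ext i j
  simp only [Tinv, transpose_apply, of_apply, green, min_comm, max_comm]

theorem mul_Umat_apply_zero {m : Type*} {n : ℕ} (A : Matrix m (Fin n) ℝ) (i : m) (hn : 0 < n) :
    (A * Umat n) i 0 = Real.sqrt 2 * A i ⟨0, hn⟩ := by
  rw [mul_apply, Fintype.sum_eq_single ⟨0, hn⟩]
  · simp [Umat, mul_comm]
  · intro k hk
    simp [Umat, Fin.ext_iff.not.mp hk]

theorem mul_Umat_apply_one {m : Type*} {n : ℕ} (A : Matrix m (Fin n) ℝ) (i : m) (hn : 0 < n) :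
    (A * Umat n) i 1 = Real.sqrt 2 * A i ⟨n - 1, by omega⟩ := by
  rw [mul_apply, Fintype.sum_eq_single ⟨n - 1, by omega⟩]
  · simp [Umat, mul_comm]
  · intro k hk
    simp [Umat, Fin.ext_iff.not.mp hk]

theorem Tinv_mul_Umat_apply_zero (n : ℕ) (k : Fin n) :
    (Tinv n * Umat n) k 0 = Real.sqrt 2 / (n + 1) * (n - k) := by
  rw [mul_Umat_apply_zero _ _ k.pos]
  simp only [Tinv, of_apply, green, Nat.cast_zero,
    min_eq_right (Int.natCast_nonneg _), max_eq_left (Int.natCast_nonneg _)]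
  push_cast
  ring

theorem Tinv_mul_Umat_apply_one (n : ℕ) (k : Fin n) :
    (Tinv n * Umat n) k 1 = Real.sqrt 2 / (n + 1) * (k + 1) := by
  have hk := k.isLt
  rw [mul_Umat_apply_one _ _ k.pos]
  simp only [Tinv, of_apply, green]
  rw [min_eq_left (by omega), max_eq_right (by omega)]
  push_cast [Nat.cast_sub k.pos]
  ring

theorem sum_range_sub_sq (m : ℝ) (n : ℕ) :
    ∑ k ∈ range n, (m - k) ^ 2 =
      n * m ^ 2 - n * (n - 1) * m + n * (n - 1) * (2 * n - 1) / 6 := by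
  induction n with
  | zero => simp
  | succ n ih => rw [sum_range_succ, ih]; push_cast; ring

theorem sum_range_succ_mul_sub (m : ℝ) (n : ℕ) :
    ∑ k ∈ range n, (k + 1) * (m - k) = n * (n + 1) * m / 2 - (n - 1) * n * (n + 1) / 3 := by
  induction n with
  | zero => simp
  | succ n ih => rw [sum_range_succ, ih]; push_cast; ring

theorem sum_range_succ_sq (n : ℕ) :
    ∑ k ∈ range n, ((k : ℝ) + 1) ^ 2 = (n : ℝ) * (n + 1) * (2 * n + 1) / 6 := by
  induction n with
  | zero => simp
  | succ n ih => rw [sum_range_succ, ih]; push_cast; ring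

theorem Umat_transpose_mul_Tinv_sq_mul_Umat (n : ℕ) :
    (Umat n)ᵀ * (Tinv n * Tinv n) * Umat n =
      !![(n : ℝ) * (2 * n + 1) / (3 * (n + 1)), n * (n + 2) / (3 * (n + 1));
        n * (n + 2) / (3 * (n + 1)), n * (2 * n + 1) / (3 * (n + 1))] := by
  have hgram : (Umat n)ᵀ * (Tinv n * Tinv n) * Umat n =
      (Tinv n * Umat n)ᵀ * (Tinv n * Umat n) := by
    rw [transpose_mul, Tinv_transpose]; simp only [Matrix.mul_assoc]
  set c := Real.sqrt 2 / (n + 1)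
  have hc : c ^ 2 = 2 / (n + 1) ^ 2 := by rw [div_pow, Real.sq_sqrt zero_le_two]
  have hsum (f g : ℕ → ℝ) :
      ∑ k : Fin n, c * f k * (c * g k) = c ^ 2 * ∑ k ∈ range n, f k * g k := by
    rw [Fin.sum_univ_eq_sum_range (fun k => c * f k * (c * g k)), mul_sum]
    exact sum_congr rfl fun _ _ => by ring
  have hn : (n : ℝ) + 1 ≠ 0 := by positivity
  rw [hgram]
  ext a b
  rw [mul_apply]
  fin_cases a <;> fin_cases b <;>
    simp only [transpose_apply, Fin.zero_eta, Fin.mk_one, Tinv_mul_Umat_apply_zero,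
      Tinv_mul_Umat_apply_one, of_apply, cons_val', cons_val_zero, cons_val_one, empty_val',
      cons_val_fin_one]
  · rw [hsum (fun k => n - k) (fun k => n - k)]
    simp only [← sq, sum_range_sub_sq, hc]
    field_simp; ring
  · rw [hsum (fun k => n - k) (fun k => k + 1)]
    simp only [mul_comm _ ((_ : ℝ) + 1), sum_range_succ_mul_sub, hc]
    field_simp; ring
  · rw [hsum (fun k => k + 1) (fun k => n - k)]
    simp only [sum_range_succ_mul_sub, hc]
    field_simp; ring
  · rw [hsum (fun k => k + 1) (fun k => k + 1)]
    simp only [← sq, sum_range_succ_sq, hc]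
    field_simp; ring

theorem det_I2_add_Ut_Tinv_sq_U_general (n : ℕ) :
    IsUnit (1 + (Umat n)ᵀ * ((Tmat n)⁻¹ * (Tmat n)⁻¹) * Umat n) ∧
    (1 + (Umat n)ᵀ * ((Tmat n)⁻¹ * (Tmat n)⁻¹) * Umat n).det =
      ((n : ℝ) ^ 2 + 2 * n + 3) / 3 := by
  have hn : (n : ℝ) + 1 ≠ 0 := by positivity
  have hdet : (1 + (Umat n)ᵀ * ((Tmat n)⁻¹ * (Tmat n)⁻¹) * Umat n).det =
      ((n : ℝ) ^ 2 + 2 * n + 3) / 3 := by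
    rw [inv_Tmat, Umat_transpose_mul_Tinv_sq_mul_Umat, det_fin_two]
    simp only [Matrix.add_apply, one_apply_eq, one_apply_ne zero_ne_one, one_apply_ne one_ne_zero,
      of_apply, cons_val', cons_val_zero, cons_val_one, cons_val_fin_one, zero_add]
    field_simp
    ring
  refine ⟨(isUnit_iff_isUnit_det _).2 ?_, hdet⟩
  rw [hdet, isUnit_iff_ne_zero]
  positivity

/-- The `2 × 2` matrix `I₂ + Uᵗ T⁻² U` is invertible, with determinant
`(n² + 2n + 3)/3`. -/
theorem det_I2_add_Ut_Tinv_sq_U (n : ℕ) (hn : 1 ≤ n) :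
    IsUnit (1 + (Umat n)ᵀ * ((Tmat n)⁻¹ * (Tmat n)⁻¹) * Umat n) ∧
    (1 + (Umat n)ᵀ * ((Tmat n)⁻¹ * (Tmat n)⁻¹) * Umat n).det =
      ((n : ℝ) ^ 2 + 2 * n + 3) / 3 :=
  det_I2_add_Ut_Tinv_sq_U_general n
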